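/- Let F(v) = exp(-(v-v₀)²/2) + exp(-(v+v₀)²/2). Then ∫_ℝ F'(v)/v dv = ∫_ℝ (F(v) - F(0))/v² dv, and for v₀ sufficiently large this integral is strictly positive. -/

import Mathlib

/-!
Put `G v = (F v - F 0) / v`. As `F` is even, `F' 0 = 0`, so `G` is continuous at `0`; as `F`
is bounded, `G → 0` at `±∞`. Since `G' = F'/v - (F - F 0)/v²` away from `0`, the identity is
the fundamental theorem of calculus on each half-line.

For positivity write `F v = F 0 · e^{-v²/2} · cosh (v v₀) ≥ F 0 · e^{-v²/2}`; this bounds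
the integrand below by `-2 F 0 / (1 + v²)`, whose integral is `-2π F 0 = -4π e^{-v₀²/2}`. On
the other hand, on `[v₀ - 1, v₀ + 1]` the integrand plus `2 F 0 / (1 + v²)` is at least
`e^{-1/2} / (v₀ + 1)²`, and this polynomially small gain beats the Gaussian loss for large
`v₀`.
-/

open MeasureTheory Real

/-- The double-bump profile `F(v) = exp(-(v-v₀)²/2) + exp(-(v+v₀)²/2)`. -/
noncomputable def doubleBump (v₀ v : ℝ) : ℝ :=
  Real.exp (-(v - v₀) ^ 2 / 2) + Real.exp (-(v + v₀) ^ 2 / 2)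

open Filter Topology Set

section IntegrationByParts

variable {f f' : ℝ → ℝ} {B C : ℝ}

lemma abs_sub_apply_zero_le_mul_sq (hf : ∀ x, HasDerivAt f (f' x) x)
    (hf' : ∀ x, |f' x| ≤ C * |x|) (x : ℝ) : |f x - f 0| ≤ C * x ^ 2 := by
  have hC : 0 ≤ C := by simpa using (abs_nonneg _).trans (hf' 1)
  have h := Convex.norm_image_sub_le_of_norm_hasDerivWithin_le (C := C * |x|)
    (fun t _ => (hf t).hasDerivWithinAt) (fun t ht => ?_) (convex_uIcc 0 x)
    left_mem_uIcc right_mem_uIcc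
  · simpa [← sq_abs x, sq, mul_assoc] using h
  · have := abs_sub_left_of_mem_uIcc ht
    simp only [sub_zero] at this
    exact (hf' t).trans (mul_le_mul_of_nonneg_left this hC)

lemma integrable_sub_apply_zero_div_sq (hf : ∀ x, HasDerivAt f (f' x) x)
    (hf' : ∀ x, |f' x| ≤ C * |x|) (hB : ∀ x, |f x| ≤ B) :
    Integrable fun x => (f x - f 0) / x ^ 2 := by
  have hcont : Continuous f := continuous_iff_continuousAt.2 fun x => (hf x).continuousAt
  refine (integrable_inv_one_add_sq.const_mul (2 * C + 4 * B)).mono'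
    ((hcont.sub continuous_const).aestronglyMeasurable.div₀ (by fun_prop))
    (ae_of_all _ fun x => ?_)
  have hC : 0 ≤ C := by simpa using (abs_nonneg _).trans (hf' 1)
  have hB0 : 0 ≤ B := (abs_nonneg _).trans (hB 0)
  have hsub : |f x - f 0| ≤ 2 * B := (abs_sub _ _).trans (by linarith [hB x, hB 0])
  have hsq := abs_sub_apply_zero_le_mul_sq hf hf' x
  rw [Real.norm_eq_abs, abs_div, abs_of_nonneg (sq_nonneg x), ← div_eq_mul_inv]
  rcases eq_or_ne x 0 with rfl | hx
  · rw [sub_self, abs_zero, zero_div]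
    exact div_nonneg (by linarith) (by positivity)
  rw [div_le_div_iff₀ (by positivity) (by positivity)]
  rcases le_total (x ^ 2) 1 with h | h <;> nlinarith [abs_nonneg (f x - f 0), sq_nonneg x]

lemma integrable_div_self_of_integrable (hf' : ∀ x, |f' x| ≤ C * |x|) (hint : Integrable f') :
    Integrable fun x => f' x / x := by
  have hC : 0 ≤ C := by simpa using (abs_nonneg _).trans (hf' 1)
  have hdom : Integrable fun x => |f' x| + (Icc (-1) 1).indicator (fun _ => C) x :=
    hint.abs.add ((integrable_indicator_iff measurableSet_Icc).2 (integrableOn_const (by simp)))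
  refine hdom.mono' (hint.1.div₀ aestronglyMeasurable_id) (ae_of_all _ fun x => ?_)
  rw [norm_div, Real.norm_eq_abs, Real.norm_eq_abs]
  by_cases hx : x ∈ Icc (-1) 1
  · rw [indicator_of_mem hx]
    have := div_le_of_le_mul₀ (abs_nonneg x) hC (hf' x)
    linarith [abs_nonneg (f' x)]
  · rw [indicator_of_notMem hx, add_zero]
    refine div_le_self (abs_nonneg _) ?_
    rw [mem_Icc, ← abs_le] at hx
    linarith

lemma continuousAt_sub_apply_zero_div (hf : HasDerivAt f 0 0) :
    ContinuousAt (fun x => (f x - f 0) / x) 0 := by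
  -- at `0` the quotient is `0 / 0 = 0`, which is the limit of the slopes
  rw [← continuousWithinAt_compl_self, ContinuousWithinAt]
  simpa [slope_def_field, div_eq_inv_mul] using hf.tendsto_slope_zero

theorem integral_deriv_div_eq_integral_sub_div_sq (hf : ∀ x, HasDerivAt f (f' x) x)
    (hf' : ∀ x, |f' x| ≤ C * |x|) (hB : ∀ x, |f x| ≤ B) (hint : Integrable f') :
    ∫ x, f' x / x = ∫ x, (f x - f 0) / x ^ 2 := by
  set G : ℝ → ℝ := fun x => (f x - f 0) / x
  have hG_deriv : ∀ x ≠ 0, HasDerivAt G (f' x / x - (f x - f 0) / x ^ 2) x := fun x hx => by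
    refine (((hf x).sub_const (f 0)).div (hasDerivAt_id x) hx).congr_deriv ?_
    simp only [id]
    field_simp
  have hf'0 : f' 0 = 0 := by simpa using hf' 0
  have hG_zero : ContinuousAt G 0 := continuousAt_sub_apply_zero_div (by simpa [hf'0] using hf 0)
  have hbdd : ∀ l : Filter ℝ, IsBoundedUnder (· ≤ ·) l fun x => ‖f x - f 0‖ := fun l =>
    isBoundedUnder_of ⟨2 * B, fun x => (abs_sub _ _).trans (by linarith [hB x, hB 0])⟩
  have hG_top : Tendsto G atTop (𝓝 0) := by
    simpa [G, div_eq_inv_mul] using tendsto_inv_atTop_zero.zero_mul_isBoundedUnder_le (hbdd _)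
  have hG_bot : Tendsto G atBot (𝓝 0) := by
    simpa [G, div_eq_inv_mul] using tendsto_inv_atBot_zero.zero_mul_isBoundedUnder_le (hbdd _)
  have hint₁ := integrable_div_self_of_integrable hf' hint
  have hint₂ := integrable_sub_apply_zero_div_sq hf hf' hB
  have hφ : Integrable fun x => f' x / x - (f x - f 0) / x ^ 2 := hint₁.sub hint₂
  have hIoi := integral_Ioi_of_hasDerivAt_of_tendsto hG_zero.continuousWithinAt
    (fun x hx => hG_deriv x (ne_of_gt hx)) hφ.integrableOn hG_top
  have hIic := integral_Iic_of_hasDerivAt_of_tendsto hG_zero.continuousWithinAt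
    (fun x hx => hG_deriv x (ne_of_lt hx)) hφ.integrableOn hG_bot
  rw [← sub_eq_zero, ← integral_sub hint₁ hint₂,
    ← intervalIntegral.integral_Iic_add_Ioi hφ.integrableOn hφ.integrableOn, hIoi, hIic]
  ring

end IntegrationByParts

lemma hasDerivAt_exp_neg_sq_div_two (y : ℝ) :
    HasDerivAt (fun y => exp (-y ^ 2 / 2)) (-y * exp (-y ^ 2 / 2)) y := by
  refine ((hasDerivAt_pow 2 y).neg.div_const 2).exp.congr_deriv ?_
  simp only [Pi.neg_apply]
  ring

lemma hasDerivAt_neg_mul_exp_neg_sq_div_two (y : ℝ) :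
    HasDerivAt (fun y => -y * exp (-y ^ 2 / 2)) ((y ^ 2 - 1) * exp (-y ^ 2 / 2)) y := by
  refine ((hasDerivAt_neg y).mul (hasDerivAt_exp_neg_sq_div_two y)).congr_deriv ?_
  ring

lemma abs_sq_sub_one_mul_exp_neg_sq_div_two_le (y : ℝ) :
    |(y ^ 2 - 1) * exp (-y ^ 2 / 2)| ≤ 2 := by
  have hinv : exp (-y ^ 2 / 2) * exp (y ^ 2 / 2) = 1 := by
    rw [← exp_add, neg_div, neg_add_cancel, exp_zero]
  have hle : exp (-y ^ 2 / 2) ≤ 1 := exp_le_one_iff.2 (by nlinarith [sq_nonneg y])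
  rw [abs_le]
  constructor <;> nlinarith [sq_nonneg y, add_one_le_exp (y ^ 2 / 2), exp_pos (-y ^ 2 / 2)]

noncomputable def doubleBumpDeriv (v₀ v : ℝ) : ℝ :=
  -(v - v₀) * exp (-(v - v₀) ^ 2 / 2) + -(v + v₀) * exp (-(v + v₀) ^ 2 / 2)

lemma hasDerivAt_doubleBump (v₀ v : ℝ) :
    HasDerivAt (doubleBump v₀) (doubleBumpDeriv v₀ v) v :=
  ((hasDerivAt_exp_neg_sq_div_two _).comp_sub_const v v₀).add
    ((hasDerivAt_exp_neg_sq_div_two _).comp_add_const v v₀)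

lemma abs_doubleBumpDeriv_le (v₀ v : ℝ) : |doubleBumpDeriv v₀ v| ≤ 4 * |v| := by
  have hderiv : ∀ x, HasDerivAt (doubleBumpDeriv v₀)
      (((x - v₀) ^ 2 - 1) * exp (-(x - v₀) ^ 2 / 2) +
        ((x + v₀) ^ 2 - 1) * exp (-(x + v₀) ^ 2 / 2)) x := fun x =>
    ((hasDerivAt_neg_mul_exp_neg_sq_div_two _).comp_sub_const x v₀).add
      ((hasDerivAt_neg_mul_exp_neg_sq_div_two _).comp_add_const x v₀)
  have h := Convex.norm_image_sub_le_of_norm_hasDerivWithin_le (C := 2 + 2)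
    (fun x _ => (hderiv x).hasDerivWithinAt)
    (fun x _ => (norm_add_le _ _).trans (add_le_add
      (abs_sq_sub_one_mul_exp_neg_sq_div_two_le _) (abs_sq_sub_one_mul_exp_neg_sq_div_two_le _)))
    convex_univ (mem_univ 0) (mem_univ v)
  have h0 : doubleBumpDeriv v₀ 0 = 0 := by simp [doubleBumpDeriv]
  norm_num [h0] at h
  linarith

lemma integrable_doubleBumpDeriv (v₀ : ℝ) : Integrable (doubleBumpDeriv v₀) := by
  have h : Integrable fun y : ℝ => -y * exp (-y ^ 2 / 2) := by
    simpa [neg_mul, div_eq_inv_mul, mul_comm] using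
      (integrable_mul_exp_neg_mul_sq (b := 1 / 2) (by norm_num)).neg
  exact (h.comp_sub_right v₀).add (h.comp_add_right v₀)

lemma doubleBump_pos (v₀ v : ℝ) : 0 < doubleBump v₀ v := by
  rw [doubleBump]
  positivity

lemma abs_doubleBump_le (v₀ v : ℝ) : |doubleBump v₀ v| ≤ 2 := by
  have h₁ : exp (-(v - v₀) ^ 2 / 2) ≤ 1 :=
    exp_le_one_iff.2 (by nlinarith [sq_nonneg (v - v₀)])
  have h₂ : exp (-(v + v₀) ^ 2 / 2) ≤ 1 :=
    exp_le_one_iff.2 (by nlinarith [sq_nonneg (v + v₀)])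
  rw [abs_of_pos (doubleBump_pos v₀ v), doubleBump]
  linarith

theorem integral_deriv_doubleBump_div (v₀ : ℝ) :
    ∫ v, deriv (doubleBump v₀) v / v =
      ∫ v, (doubleBump v₀ v - doubleBump v₀ 0) / v ^ 2 := by
  simp_rw [fun v => (hasDerivAt_doubleBump v₀ v).deriv]
  exact integral_deriv_div_eq_integral_sub_div_sq (hasDerivAt_doubleBump v₀)
    (abs_doubleBumpDeriv_le v₀) (abs_doubleBump_le v₀) (integrable_doubleBumpDeriv v₀)

lemma doubleBump_eq_mul_cosh (v₀ v : ℝ) :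
    doubleBump v₀ v = 2 * exp (-v₀ ^ 2 / 2) * exp (-v ^ 2 / 2) * cosh (v * v₀) := by
  have e₁ : exp (-(v - v₀) ^ 2 / 2) =
      exp (-v₀ ^ 2 / 2) * exp (-v ^ 2 / 2) * exp (v * v₀) := by
    rw [← exp_add, ← exp_add]; ring_nf
  have e₂ : exp (-(v + v₀) ^ 2 / 2) =
      exp (-v₀ ^ 2 / 2) * exp (-v ^ 2 / 2) * exp (-(v * v₀)) := by
    rw [← exp_add, ← exp_add]; ring_nf
  rw [doubleBump, cosh_eq, e₁, e₂]
  ring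

lemma doubleBump_zero (v₀ : ℝ) : doubleBump v₀ 0 = 2 * exp (-v₀ ^ 2 / 2) := by
  simp [doubleBump_eq_mul_cosh]

lemma doubleBump_zero_mul_exp_le (v₀ v : ℝ) :
    doubleBump v₀ 0 * exp (-v ^ 2 / 2) ≤ doubleBump v₀ v := by
  rw [doubleBump_eq_mul_cosh v₀ v, doubleBump_zero]
  exact le_mul_of_one_le_right (by positivity) (one_le_cosh _)

lemma neg_le_doubleBump_sub_div_sq (v₀ v : ℝ) :
    -(2 * doubleBump v₀ 0 * (1 + v ^ 2)⁻¹) ≤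
      (doubleBump v₀ v - doubleBump v₀ 0) / v ^ 2 := by
  have hF0 := doubleBump_pos v₀ 0
  have hF := doubleBump_pos v₀ v
  rcases eq_or_ne v 0 with rfl | hv
  · rw [sub_self, zero_div, neg_nonpos]
    exact mul_nonneg (by linarith) (by positivity)
  have hlow := doubleBump_zero_mul_exp_le v₀ v
  have hexp : 1 - v ^ 2 / 2 ≤ exp (-v ^ 2 / 2) := by linarith [add_one_le_exp (-v ^ 2 / 2)]
  rw [neg_le, ← neg_div, neg_sub, ← div_eq_mul_inv,
    div_le_div_iff₀ (by positivity) (by positivity)]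
  rcases le_total (v ^ 2) 1 with h | h <;> nlinarith [sq_nonneg v]

lemma exp_neg_half_div_le_of_abs_sub_le_one {v₀ v : ℝ} (hv : 1 ≤ v)
    (hvv₀ : |v - v₀| ≤ 1) :
    exp (-1 / 2) / (v₀ + 1) ^ 2 ≤
      (doubleBump v₀ v - doubleBump v₀ 0) / v ^ 2 +
        2 * doubleBump v₀ 0 * (1 + v ^ 2)⁻¹ := by
  have hF0 := doubleBump_pos v₀ 0
  have hF : exp (-1 / 2) ≤ doubleBump v₀ v := by
    have : exp (-1 / 2) ≤ exp (-(v - v₀) ^ 2 / 2) :=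
      exp_le_exp.2 (by nlinarith [abs_le.1 hvv₀, sq_abs (v - v₀)])
    rw [doubleBump]; linarith [exp_pos (-(v + v₀) ^ 2 / 2)]
  calc exp (-1 / 2) / (v₀ + 1) ^ 2 ≤ doubleBump v₀ v / v ^ 2 :=
        div_le_div₀ ((exp_pos _).le.trans hF) hF (by positivity) (by nlinarith [abs_le.1 hvv₀])
    _ ≤ _ := by
      rw [sub_div, ← div_eq_mul_inv]
      have : doubleBump v₀ 0 / v ^ 2 ≤ 2 * doubleBump v₀ 0 / (1 + v ^ 2) := by
        rw [div_le_div_iff₀ (by positivity) (by positivity)]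
        nlinarith [mul_le_mul_of_nonneg_left (one_le_pow₀ hv : 1 ≤ v ^ 2) hF0.le]
      linarith

lemma le_integral_doubleBump_sub_div_sq (v₀ : ℝ) (hv₀ : 2 ≤ v₀) :
    2 * exp (-1 / 2) / (v₀ + 1) ^ 2 - 2 * π * doubleBump v₀ 0 ≤
      ∫ v, (doubleBump v₀ v - doubleBump v₀ 0) / v ^ 2 := by
  set F0 := doubleBump v₀ 0
  set φ := fun v => (doubleBump v₀ v - F0) / v ^ 2 + 2 * F0 * (1 + v ^ 2)⁻¹
  have hint := integrable_sub_apply_zero_div_sq (hasDerivAt_doubleBump v₀)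
    (abs_doubleBumpDeriv_le v₀) (abs_doubleBump_le v₀)
  have hφ : Integrable φ := hint.add (integrable_inv_one_add_sq.const_mul _)
  have hφ_eq : ∫ v, φ v = (∫ v, (doubleBump v₀ v - F0) / v ^ 2) + 2 * π * F0 := by
    rw [integral_add hint (integrable_inv_one_add_sq.const_mul _), integral_const_mul,
      integral_univ_inv_one_add_sq]
    ring
  have hT : ∫ _ in Icc (v₀ - 1) (v₀ + 1), exp (-1 / 2) / (v₀ + 1) ^ 2 ≤
      ∫ v in Icc (v₀ - 1) (v₀ + 1), φ v :=
    setIntegral_mono_on (integrableOn_const measure_Icc_lt_top.ne) hφ.integrableOn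
      measurableSet_Icc fun v hv => exp_neg_half_div_le_of_abs_sub_le_one
        (by linarith [hv.1])
        (abs_le.2 ⟨by linarith [hv.1], by linarith [hv.2]⟩)
  rw [setIntegral_const, Real.volume_real_Icc, show v₀ + 1 - (v₀ - 1) = 2 by ring,
    max_eq_left zero_le_two, smul_eq_mul] at hT
  have hφ_nonneg : ∀ v, 0 ≤ φ v := fun v =>
    neg_le_iff_add_nonneg.1 (neg_le_doubleBump_sub_div_sq v₀ v)
  have := setIntegral_le_integral (s := Icc (v₀ - 1) (v₀ + 1)) hφ (ae_of_all _ hφ_nonneg)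
  rw [mul_div_assoc]
  linarith

lemma tendsto_add_one_sq_mul_exp_neg_sq_div_two :
    Tendsto (fun x : ℝ => (x + 1) ^ 2 * exp (-x ^ 2 / 2)) atTop (𝓝 0) := by
  have hsq : Tendsto (fun x : ℝ => x ^ 2 / 2) atTop atTop :=
    (tendsto_pow_atTop two_ne_zero).atTop_div_const two_pos
  have h := (tendsto_pow_mul_exp_neg_atTop_nhds_zero 2).comp hsq
  refine squeeze_zero' (Eventually.of_forall fun x => by positivity) ?_ h
  filter_upwards [eventually_ge_atTop 3] with x hx
  simp only [Function.comp_apply, neg_div]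
  gcongr
  nlinarith

theorem eventually_integral_doubleBump_sub_div_sq_pos :
    ∀ᶠ v₀ in atTop, 0 < ∫ v, (doubleBump v₀ v - doubleBump v₀ 0) / v ^ 2 := by
  have hc : 0 < exp (-1 / 2) / (2 * π) := by positivity
  filter_upwards [eventually_ge_atTop 2,
    tendsto_add_one_sq_mul_exp_neg_sq_div_two.eventually (gt_mem_nhds hc)] with v₀ hv₀ hsmall
  refine lt_of_lt_of_le ?_ (le_integral_doubleBump_sub_div_sq v₀ hv₀)
  rw [doubleBump_zero, sub_pos, lt_div_iff₀ (by positivity)]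
  rw [lt_div_iff₀ (by positivity)] at hsmall
  linarith

/-- For `F(v) = exp(-(v-v₀)²/2) + exp(-(v+v₀)²/2)` one has
`∫ F'(v)/v dv = ∫ (F(v) - F(0))/v² dv`, and for `v₀` sufficiently large this
integral is strictly positive. -/
theorem doubleBump_integral_identity_and_positive :
    (∀ v₀ : ℝ, 0 < v₀ →
      (∫ v : ℝ, deriv (doubleBump v₀) v / v) =
        ∫ v : ℝ, (doubleBump v₀ v - doubleBump v₀ 0) / v ^ 2) ∧
    ∃ V : ℝ, ∀ v₀ : ℝ, V ≤ v₀ →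
      0 < ∫ v : ℝ, (doubleBump v₀ v - doubleBump v₀ 0) / v ^ 2 :=
  ⟨fun v₀ _ => integral_deriv_doubleBump_div v₀,
    eventually_atTop.1 eventually_integral_doubleBump_sub_div_sq_pos⟩
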